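/- arXiv:2201.12588 — 5 statements merged into one kernel-verified Lean document; each statement's English description precedes it below -/
import Mathlib

section
/- Let K be a field with char K ≠ 2 and let k ∈ K satisfy k ∉ {4, -4} and k² ≠ -16 (i.e., k⁴ ≠ 256). Then the only singular point of the affine surface W_k : F(x,y,z) = x² + y² + z² + x²y²z² + k·x·y·z = 0 with k ≠ 0 is (0,0,0); that is, any point (x,y,z) with F = F_x = F_y = F_z = 0 must equal (0,0,0). -/
/-!
With `p = xyz`, Euler-type identities give `x F_x + y F_y + z F_z - 2F = p (4p + k)` and
`x F_x = 2x² + p (2p + k)`. At a singular point the first forces `kp = -4p²`, and then the second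
gives `x² = p²`, and likewise `y² = z² = p²`. Multiplying, `p² = p⁶`, so either `p = 0`, whence
`x = y = z = 0`, or `p⁴ = 1` and `k = -4p`, whence `k⁴ = 256`.
-/

/-- The defining polynomial of the affine surface `W_k`. -/
def Fpoly {K : Type*} [Field K] (k x y z : K) : K :=
  x ^ 2 + y ^ 2 + z ^ 2 + x ^ 2 * y ^ 2 * z ^ 2 + k * x * y * z

/-- `∂F/∂x`. -/
def Fx {K : Type*} [Field K] (k x y z : K) : K :=
  2 * x + 2 * x * y ^ 2 * z ^ 2 + k * y * z

/-- `∂F/∂y`. -/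
def Fy {K : Type*} [Field K] (k x y z : K) : K :=
  2 * y + 2 * x ^ 2 * y * z ^ 2 + k * x * z

/-- `∂F/∂z`. -/
def Fz {K : Type*} [Field K] (k x y z : K) : K :=
  2 * z + 2 * x ^ 2 * y ^ 2 * z + k * x * y

section Identities

variable {K : Type*} [Field K] (k x y z : K)

theorem mul_Fx : x * Fx k x y z = 2 * x ^ 2 + x * y * z * (2 * (x * y * z) + k) := by
  unfold Fx; ring

theorem mul_Fy : y * Fy k x y z = 2 * y ^ 2 + x * y * z * (2 * (x * y * z) + k) := by
  unfold Fy; ring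

theorem mul_Fz : z * Fz k x y z = 2 * z ^ 2 + x * y * z * (2 * (x * y * z) + k) := by
  unfold Fz; ring

theorem mul_Fx_add_mul_Fy_add_mul_Fz_sub_two_mul_Fpoly :
    x * Fx k x y z + y * Fy k x y z + z * Fz k x y z - 2 * Fpoly k x y z =
      x * y * z * (4 * (x * y * z) + k) := by
  unfold Fx Fy Fz Fpoly; ring

end Identities

section Algebra

variable {R : Type*} [CommRing R] [NoZeroDivisors R]

theorem sq_eq_sq_of_mul_add_eq_zero {a p k : R} (h2 : (2 : R) ≠ 0)
    (hp : p * (4 * p + k) = 0) (ha : 2 * a ^ 2 + p * (2 * p + k) = 0) : a ^ 2 = p ^ 2 := by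
  have h : 2 * (a ^ 2 - p ^ 2) = 0 := by linear_combination ha - hp
  exact sub_eq_zero.mp ((mul_eq_zero.mp h).resolve_left h2)

theorem eq_zero_or_pow_four_eq_one_of_sq_eq {x y z p : R} (hp : p = x * y * z)
    (hx : x ^ 2 = p ^ 2) (hy : y ^ 2 = p ^ 2) (hz : z ^ 2 = p ^ 2) : p = 0 ∨ p ^ 4 = 1 := by
  have h : p ^ 2 * (p ^ 4 - 1) = 0 := by
    subst hp
    linear_combination -(y ^ 2 * z ^ 2) * hx - (x * y * z) ^ 2 * z ^ 2 * hy
      - (x * y * z) ^ 4 * hz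
  rcases mul_eq_zero.mp h with h | h
  · exact .inl (pow_eq_zero_iff two_ne_zero |>.mp h)
  · exact .inr (sub_eq_zero.mp h)

theorem eq_four_or_eq_neg_four_or_sq_eq_neg_sixteen_of_pow_four_eq {k : R}
    (hk : k ^ 4 = 256) : k = 4 ∨ k = -4 ∨ k ^ 2 = -16 := by
  have h : (k - 4) * ((k + 4) * (k ^ 2 + 16)) = 0 := by linear_combination hk
  rcases mul_eq_zero.mp h with h | h
  · exact .inl (sub_eq_zero.mp h)
  rcases mul_eq_zero.mp h with h | h
  · exact .inr (.inl (eq_neg_of_add_eq_zero_left h))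
  · exact .inr (.inr (eq_neg_of_add_eq_zero_left h))

end Algebra

theorem stmt_3_general {K : Type*} [Field K] (h2 : (2 : K) ≠ 0) (k : K)
    (hk4 : k ≠ 4) (hk4' : k ≠ -4) (hk16 : k ^ 2 ≠ -16) (x y z : K)
    (hF : Fpoly k x y z = 0) (hFx : Fx k x y z = 0)
    (hFy : Fy k x y z = 0) (hFz : Fz k x y z = 0) :
    x = 0 ∧ y = 0 ∧ z = 0 := by
  have hp : x * y * z * (4 * (x * y * z) + k) = 0 := by
    rw [← mul_Fx_add_mul_Fy_add_mul_Fz_sub_two_mul_Fpoly, hF, hFx, hFy, hFz]; ring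
  have hx := sq_eq_sq_of_mul_add_eq_zero h2 hp (by rw [← mul_Fx, hFx, mul_zero])
  have hy := sq_eq_sq_of_mul_add_eq_zero h2 hp (by rw [← mul_Fy, hFy, mul_zero])
  have hz := sq_eq_sq_of_mul_add_eq_zero h2 hp (by rw [← mul_Fz, hFz, mul_zero])
  rcases eq_zero_or_pow_four_eq_one_of_sq_eq rfl hx hy hz with h0 | h1
  · rw [h0, zero_pow two_ne_zero] at hx hy hz
    exact ⟨pow_eq_zero_iff two_ne_zero |>.mp hx, pow_eq_zero_iff two_ne_zero |>.mp hy,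
      pow_eq_zero_iff two_ne_zero |>.mp hz⟩
  · have hp0 : x * y * z ≠ 0 := by rintro h; simp [h] at h1
    have hk : k = -4 * (x * y * z) := by
      linear_combination (mul_eq_zero.mp hp).resolve_left hp0
    have hk256 : k ^ 4 = 256 := by rw [hk]; linear_combination 256 * h1
    rcases eq_four_or_eq_neg_four_or_sq_eq_neg_sixteen_of_pow_four_eq hk256 with h | h | h
    exacts [absurd h hk4, absurd h hk4', absurd h hk16]

/-- If `char K ≠ 2`, `k ≠ 0`, `k ∉ {4,-4}` and `k² ≠ -16`, then the only singular
point of the affine surface `W_k` is `(0,0,0)`. -/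
theorem stmt_3 {K : Type*} [Field K] (h2 : (2 : K) ≠ 0) (k : K) (hk : k ≠ 0)
    (hk4 : k ≠ 4) (hk4' : k ≠ -4) (hk16 : k ^ 2 ≠ -16) (x y z : K)
    (hF : Fpoly k x y z = 0) (hFx : Fx k x y z = 0)
    (hFy : Fy k x y z = 0) (hFz : Fz k x y z = 0) :
    x = 0 ∧ y = 0 ∧ z = 0 :=
  stmt_3_general h2 k hk4 hk4' hk16 x y z hF hFx hFy hFz
end

section
/- Let K be a field with char K ≠ 2 and k ∈ K nonzero. Any point (x,y,z) ∈ K³ satisfying F = F_x = F_y = F_z = 0, where F(x,y,z) = x² + y² + z² + x²y²z² + k·x·y·z, must satisfy x² = y² = z². Moreover, if xyz ≠ 0, then additionally x⁴ = y⁴ = z⁴ = 1, 16x² = 16y² = 16z² = k², and k⁴ = 256. -/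
section CriticalPoints

variable {K : Type*} [Field K] {k x y z : K}

theorem mul_Fx_sub_mul_Fy (k x y z : K) :
    x * Fx k x y z - y * Fy k x y z = 2 * (x ^ 2 - y ^ 2) := by
  unfold Fx Fy
  ring

theorem mul_Fx_sub_mul_Fz (k x y z : K) :
    x * Fx k x y z - z * Fz k x y z = 2 * (x ^ 2 - z ^ 2) := by
  unfold Fx Fz
  ring

theorem sq_eq_sq_of_Fx_eq_zero_of_Fy_eq_zero (h2 : (2 : K) ≠ 0)
    (hFx : Fx k x y z = 0) (hFy : Fy k x y z = 0) : x ^ 2 = y ^ 2 := by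
  have h : 2 * (x ^ 2 - y ^ 2) = 0 := by
    rw [← mul_Fx_sub_mul_Fy, hFx, hFy]
    ring
  exact sub_eq_zero.mp ((mul_eq_zero.mp h).resolve_left h2)

theorem sq_eq_sq_of_Fx_eq_zero_of_Fz_eq_zero (h2 : (2 : K) ≠ 0)
    (hFx : Fx k x y z = 0) (hFz : Fz k x y z = 0) : x ^ 2 = z ^ 2 := by
  have h : 2 * (x ^ 2 - z ^ 2) = 0 := by
    rw [← mul_Fx_sub_mul_Fz, hFx, hFz]
    ring
  exact sub_eq_zero.mp ((mul_eq_zero.mp h).resolve_left h2)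

variable (hxy : x ^ 2 = y ^ 2) (hxz : x ^ 2 = z ^ 2) (hF : Fpoly k x y z = 0)
include hxy hxz hF

theorem pow_four_eq_one_of_critical (hFx : Fx k x y z = 0) (hx : x ≠ 0) : x ^ 4 = 1 := by
  have h : x ^ 2 * (1 - x ^ 4) = 0 := by
    unfold Fpoly at hF
    unfold Fx at hFx
    linear_combination hF - x * hFx + (1 - x ^ 2 * z ^ 2) * hxy + (1 - x ^ 4) * hxz
  linear_combination -(mul_eq_zero.mp h).resolve_left (pow_ne_zero 2 hx)

theorem k_mul_xyz_eq_neg_four_mul_sq (hx4 : x ^ 4 = 1) :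
    k * (x * y * z) = -(4 * x ^ 2) := by
  unfold Fpoly at hF
  linear_combination hF - x ^ 2 * hx4 + (x ^ 4 + 1) * hxy + (x ^ 2 * y ^ 2 + 1) * hxz

theorem sixteen_mul_sq_eq_sq (hx4 : x ^ 4 = 1) : 16 * x ^ 2 = k ^ 2 := by
  have hkxyz := k_mul_xyz_eq_neg_four_mul_sq hxy hxz hF hx4
  have h6 : k ^ 2 * x ^ 6 = 16 * x ^ 4 := by
    have hsq : (k * (x * y * z)) ^ 2 = (4 * x ^ 2) ^ 2 := by rw [hkxyz]; ring
    linear_combination hsq + k ^ 2 * x ^ 4 * hxy + k ^ 2 * x ^ 2 * y ^ 2 * hxz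
  linear_combination (k ^ 2 * (x ^ 4 + 1) - 16 * x ^ 2) * hx4 - x ^ 2 * h6

end CriticalPoints

theorem stmt_5_general {K : Type*} [Field K] (h2 : (2 : K) ≠ 0) (k : K)
    (x y z : K)
    (hF : Fpoly k x y z = 0) (hFx : Fx k x y z = 0)
    (hFy : Fy k x y z = 0) (hFz : Fz k x y z = 0) :
    (x ^ 2 = y ^ 2 ∧ x ^ 2 = z ^ 2 ∧ y ^ 2 = z ^ 2) ∧
    (x * y * z ≠ 0 →
      (x ^ 4 = 1 ∧ y ^ 4 = 1 ∧ z ^ 4 = 1) ∧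
      (16 * x ^ 2 = k ^ 2 ∧ 16 * y ^ 2 = k ^ 2 ∧ 16 * z ^ 2 = k ^ 2) ∧
      k ^ 4 = 256) := by
  have hxy := sq_eq_sq_of_Fx_eq_zero_of_Fy_eq_zero h2 hFx hFy
  have hxz := sq_eq_sq_of_Fx_eq_zero_of_Fz_eq_zero h2 hFx hFz
  refine ⟨⟨hxy, hxz, hxy ▸ hxz⟩, fun hxyz => ?_⟩
  have hx : x ≠ 0 := left_ne_zero_of_mul (left_ne_zero_of_mul hxyz)
  have hx4 := pow_four_eq_one_of_critical hxy hxz hF hFx hx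
  have h16 := sixteen_mul_sq_eq_sq hxy hxz hF hx4
  have hpow4 (w : K) (hw : x ^ 2 = w ^ 2) : w ^ 4 = 1 := by
    rw [← hx4, show 4 = 2 * 2 from rfl, pow_mul, pow_mul, hw]
  refine ⟨⟨hx4, hpow4 y hxy, hpow4 z hxz⟩, ⟨h16, hxy ▸ h16, hxz ▸ h16⟩, ?_⟩
  calc k ^ 4 = (16 * x ^ 2) ^ 2 := by rw [h16]; ring
    _ = 256 := by linear_combination 256 * hx4

/-- Common zeros of `F, F_x, F_y, F_z` on `W_k` (with `char K ≠ 2`, `k ≠ 0`)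
satisfy `x² = y² = z²`; and if `xyz ≠ 0` then moreover `x⁴ = y⁴ = z⁴ = 1`,
`16x² = 16y² = 16z² = k²` and `k⁴ = 256`. -/
theorem stmt_5 {K : Type*} [Field K] (h2 : (2 : K) ≠ 0) (k : K) (hk : k ≠ 0)
    (x y z : K)
    (hF : Fpoly k x y z = 0) (hFx : Fx k x y z = 0)
    (hFy : Fy k x y z = 0) (hFz : Fz k x y z = 0) :
    (x ^ 2 = y ^ 2 ∧ x ^ 2 = z ^ 2 ∧ y ^ 2 = z ^ 2) ∧
    (x * y * z ≠ 0 →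
      (x ^ 4 = 1 ∧ y ^ 4 = 1 ∧ z ^ 4 = 1) ∧
      (16 * x ^ 2 = k ^ 2 ∧ 16 * y ^ 2 = k ^ 2 ∧ 16 * z ^ 2 = k ^ 2) ∧
      k ^ 4 = 256) :=
  stmt_5_general h2 k x y z hF hFx hFy hFz
end

section
/- Let K be a field with char K ≠ 2, and let β ∈ K satisfy β³ + β² + β - 1 = 0 with β ≠ 0. Set k = -(β + β⁻¹)². Then both points (β, β, β) and (β, β, 1) lie on the affine surface W_k : x² + y² + z² + x²y²z² + k·x·y·z = 0. -/
/-- If `β ≠ 0` satisfies `β³ + β² + β - 1 = 0` and `k = -(β + β⁻¹)²`, then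
`(β,β,β)` and `(β,β,1)` lie on `W_k`. -/
theorem stmt_13 {K : Type*} [Field K] (h2 : (2 : K) ≠ 0) (β : K) (hβ0 : β ≠ 0)
    (hβ : β ^ 3 + β ^ 2 + β - 1 = 0) (k : K) (hk : k = -(β + β⁻¹) ^ 2) :
    Fpoly k β β β = 0 ∧ Fpoly k β β 1 = 0 := by
  have hinv : β * β⁻¹ = 1 := mul_inv_cancel₀ hβ0
  subst hk
  unfold Fpoly
  refine ⟨?_, ?_⟩ <;> field_simp
  · linear_combination (β*(β^2-2*β+1)) * hβ
  · ring
end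

section
/- Let K be a field with char K ≠ 2, let β ∈ K be nonzero with β⁸ + 2β⁴ - 4β³ - 4β² - 4β + 1 = 0 and β⁴ + 1 ≠ 0. Set γ = 2β/(β⁴+1) and k = -(3+β⁴)/β. Then the points (β,β,β) and (β,β,γ) and (1,β,γ) all lie on the affine surface W_k : x² + y² + z² + x²y²z² + k·x·y·z = 0. -/
/-- If `β ≠ 0` satisfies `β⁸ + 2β⁴ - 4β³ - 4β² - 4β + 1 = 0` with `β⁴ + 1 ≠ 0`,
`γ = 2β/(β⁴+1)` and `k = -(3+β⁴)/β`, then `(β,β,β)`, `(β,β,γ)` and `(1,β,γ)`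
lie on `W_k`. -/
theorem stmt_15 {K : Type*} [Field K] (h2 : (2 : K) ≠ 0) (β : K) (hβ0 : β ≠ 0)
    (hβ : β ^ 8 + 2 * β ^ 4 - 4 * β ^ 3 - 4 * β ^ 2 - 4 * β + 1 = 0)
    (h4 : β ^ 4 + 1 ≠ 0) (γ k : K) (hγ : γ = 2 * β / (β ^ 4 + 1))
    (hk : k = -(3 + β ^ 4) / β) :
    Fpoly k β β β = 0 ∧ Fpoly k β β γ = 0 ∧ Fpoly k 1 β γ = 0 := by
  subst hγ hk
  refine ⟨?_, ?_, ?_⟩ <;> unfold Fpoly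
  · field_simp; ring
  · field_simp; ring
  · field_simp
    linear_combination (β ^ 2 - 2 * β + 1) * hβ
end

section
/- Let α, β, γ be elements of a field K of characteristic ≠ 2 satisfying the three relations α²β - α²γ + αβ²γ² - α + β²γ - βγ² = 0, α²γ² - αβ²γ³ + αβ + βγ³ = 0, and β³γ³ - β² + βγ - γ² = 0. Assume αβγ ≠ 0 and α²β² + 1 ≠ 0. Set k = -(α² + β² + γ² + α²β²γ²)/(αβγ) and δ = (α² + β²)/(γ(α²β² + 1)). Then (α,β,γ) ∈ W_k and (α,β,δ) ∈ W_k, where W_k : x² + y² + z² + x²y²z² + k·x·y·z = 0. -/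
/-- On the genus-9 curve of parameters `(α,β,γ)`, with
`k = -(α²+β²+γ²+α²β²γ²)/(αβγ)` and `δ = (α²+β²)/(γ(α²β²+1))`, both `(α,β,γ)`
and `(α,β,δ)` lie on `W_k`. -/
theorem stmt_16 {K : Type*} [Field K] (h2 : (2 : K) ≠ 0) (α β γ : K)
    (h1 : α ^ 2 * β - α ^ 2 * γ + α * β ^ 2 * γ ^ 2 - α + β ^ 2 * γ - β * γ ^ 2 = 0)
    (h2' : α ^ 2 * γ ^ 2 - α * β ^ 2 * γ ^ 3 + α * β + β * γ ^ 3 = 0)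
    (h3 : β ^ 3 * γ ^ 3 - β ^ 2 + β * γ - γ ^ 2 = 0)
    (hne : α * β * γ ≠ 0) (hab : α ^ 2 * β ^ 2 + 1 ≠ 0) (k δ : K)
    (hk : k = -(α ^ 2 + β ^ 2 + γ ^ 2 + α ^ 2 * β ^ 2 * γ ^ 2) / (α * β * γ))
    (hδ : δ = (α ^ 2 + β ^ 2) / (γ * (α ^ 2 * β ^ 2 + 1))) :
    Fpoly k α β γ = 0 ∧ Fpoly k α β δ = 0 := by
  have hγ : γ ≠ 0 := fun h => hne (by simp [h])
  have hα : α ≠ 0 := fun h => hne (by simp [h])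
  have hβ : β ≠ 0 := fun h => hne (by simp [h])
  have hfirst : Fpoly k α β γ = 0 := by
    subst hk
    unfold Fpoly
    field_simp
    ring
  refine ⟨hfirst, ?_⟩
  have hFγ : α ^ 2 + β ^ 2 + γ ^ 2 + α ^ 2 * β ^ 2 * γ ^ 2 + k * α * β * γ = 0 := hfirst
  subst hδ
  unfold Fpoly
  field_simp
  linear_combination ((α ^ 2 + β ^ 2) * (α ^ 2 * β ^ 2 + 1)) * hFγ
end
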